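/- arXiv:1509.02404 — 3 statements merged into one kernel-verified Lean document; each statement's English description precedes it below -/
import Mathlib

section
/- Let R be a Noetherian ring, I ⊆ R an ideal, and M a finite R-module such that no associated prime of M contains I. Then colim_n Hom_R(I^n, M) is a finite R-module if and only if, for every associated prime q of M, the module colim_n Hom_R(I^n, R/q) is a finite R-module. -/
/-!
Since `Hom_R(Iⁿ, -)` is left exact and filtered colimits are exact, the local hull is left exact;
over a Noetherian ring, finiteness of the local hull therefore passes to submodules and to
extensions. If `q` is associated to `M`, then `R ⧸ q` embeds into `M`. Conversely, a minimal
primary decomposition `0 = J₁ ∩ ⋯ ∩ Jₖ` embeds `M` into `∏ M ⧸ Jᵢ`, and the radicals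
`qᵢ = √(Jᵢ : M)` are the associated primes of `M`. A power `qᵢˡ` kills `M ⧸ Jᵢ` and every
`s ∉ qᵢ` acts injectively on it, so the `qᵢ`-torsion of `M ⧸ Jᵢ` is a torsion-free module over
the domain `R ⧸ qᵢ`, hence embeds into some `(R ⧸ qᵢ)ⁿ`, and the quotient by it has the same
two properties with exponent `l - 1`.
-/

universe u

/-- The local hull `colim_n Hom_R(Iⁿ, M)`, the colimit taken along the maps induced by the
inclusions `Iⁿ⁺¹ ⊆ Iⁿ` (realized as a direct limit over `ℕ`). -/
noncomputable abbrev localHull (R : Type u) [CommRing R] (I : Ideal R)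
    (M : Type u) [AddCommGroup M] [Module R M] : Type u :=
  Module.DirectLimit (ι := ℕ) (fun n => (I ^ n : Ideal R) →ₗ[R] M)
    (fun _ _ h => LinearMap.lcomp R M (Submodule.inclusion (Ideal.pow_le_pow_right h)))

open Submodule in
theorem Module.exists_injective_pi_of_isTorsionFree {D Q : Type*} [CommRing D] [IsDomain D]
    [AddCommGroup Q] [Module D Q] [Module.Finite D Q] [Module.IsTorsionFree D Q] :
    ∃ (n : ℕ) (f : Q →ₗ[D] Fin n → D), Function.Injective f := by
  classical
  obtain ⟨k, s, hs⟩ := Module.Finite.exists_fin (R := D) (M := Q)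
  obtain ⟨J, hJ, hmax⟩ := exists_maximal_linearIndepOn D s
  set N := span D (Set.range fun i : J => s i)
  have hmul : ∀ i, ∃ a : D, a ≠ 0 ∧ a • s i ∈ N := by
    intro i
    by_cases hi : i ∈ J
    · exact ⟨1, one_ne_zero, by rw [one_smul]; exact subset_span ⟨⟨i, hi⟩, rfl⟩⟩
    · simpa [N, Set.image_eq_range] using hmax i hi
  choose a ha0 ha using hmul
  -- a common denominator pushes all of `Q` into the free module `N`
  have hA : ∏ i, a i ≠ 0 := Finset.prod_ne_zero_iff.mpr fun i _ => ha0 i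
  have hAN : ∀ x : Q, (∏ i, a i) • x ∈ N := by
    suffices ⊤ ≤ N.comap (LinearMap.lsmul D Q (∏ i, a i)) from fun x => this trivial
    rw [← hs, span_le]
    rintro _ ⟨i, rfl⟩
    rw [SetLike.mem_coe, mem_comap, LinearMap.lsmul_apply,
      ← Finset.prod_erase_mul _ _ (Finset.mem_univ i), mul_smul]
    exact N.smul_mem _ (ha i)
  refine ⟨Fintype.card J, (LinearEquiv.funCongrLeft D D (Fintype.equivFin J).symm).toLinearMap ∘ₗ
    (Basis.span hJ).equivFun.toLinearMap ∘ₗ (LinearMap.lsmul D Q (∏ i, a i)).codRestrict N hAN,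
    ?_⟩
  simp only [LinearMap.coe_comp, LinearEquiv.coe_coe]
  exact (LinearEquiv.injective _).comp <| (LinearEquiv.injective _).comp fun x y hxy =>
    smul_right_injective Q hA (congrArg Subtype.val hxy)

namespace localHull

variable {R : Type u} [CommRing R] (I : Ideal R)
variable {M N P : Type u} [AddCommGroup M] [Module R M] [AddCommGroup N] [Module R N]
  [AddCommGroup P] [Module R P]

instance : DirectedSystem (fun n => (I ^ n : Ideal R) →ₗ[R] M)
    (fun _ _ h => LinearMap.lcomp R M (Submodule.inclusion (Ideal.pow_le_pow_right h))) where
  map_self _ _ := rfl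
  map_map _ _ _ _ _ _ := rfl

noncomputable abbrev of (n : ℕ) : ((I ^ n : Ideal R) →ₗ[R] M) →ₗ[R] localHull R I M :=
  Module.DirectLimit.of R ℕ (fun n => (I ^ n : Ideal R) →ₗ[R] M)
    (fun _ _ h => LinearMap.lcomp R M (Submodule.inclusion (Ideal.pow_le_pow_right h))) n

lemma of_restrict {m n : ℕ} (h : m ≤ n) (φ : (I ^ m : Ideal R) →ₗ[R] M) :
    of I n (φ ∘ₗ Submodule.inclusion (Ideal.pow_le_pow_right h)) = of I m φ :=
  Module.DirectLimit.of_f (hij := h)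

lemma exists_of (z : localHull R I M) : ∃ n φ, of I n φ = z :=
  Module.DirectLimit.exists_of z

lemma exists_restrict_eq_zero_of_of_eq_zero {n : ℕ} {φ : (I ^ n : Ideal R) →ₗ[R] M}
    (h : of I n φ = 0) :
    ∃ m, ∃ h : n ≤ m, φ ∘ₗ Submodule.inclusion (Ideal.pow_le_pow_right h) = 0 :=
  Module.DirectLimit.of.zero_exact h

noncomputable def map (f : M →ₗ[R] N) : localHull R I M →ₗ[R] localHull R I N :=
  Module.DirectLimit.map (fun n => LinearMap.llcomp R (I ^ n : Ideal R) M N f) fun _ _ _ => rfl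

@[simp]
lemma map_of (f : M →ₗ[R] N) {n : ℕ} (φ : (I ^ n : Ideal R) →ₗ[R] M) :
    map I f (of I n φ) = of I n (f ∘ₗ φ) :=
  Module.DirectLimit.map_apply_of _ _ _

lemma map_injective {f : M →ₗ[R] N} (hf : Function.Injective f) :
    Function.Injective (map I f) := by
  refine (injective_iff_map_eq_zero _).mpr fun z hz => ?_
  obtain ⟨n, φ, rfl⟩ := exists_of I z
  rw [map_of] at hz
  obtain ⟨m, hm, h0⟩ := exists_restrict_eq_zero_of_of_eq_zero I hz
  have : φ ∘ₗ Submodule.inclusion (Ideal.pow_le_pow_right hm) = 0 :=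
    LinearMap.ext fun x => hf (by simpa using LinearMap.congr_fun h0 x)
  rw [← of_restrict I hm, this, map_zero]

lemma exact_map {f : M →ₗ[R] N} {g : N →ₗ[R] P} (hf : Function.Injective f)
    (hfg : Function.Exact f g) : Function.Exact (map I f) (map I g) := by
  refine Function.Exact.of_comp_of_mem_range (funext fun z => ?_) fun z hz => ?_
  · obtain ⟨n, φ, rfl⟩ := exists_of I z
    show map I g (map I f (of I n φ)) = 0
    have : g ∘ₗ f ∘ₗ φ = 0 := LinearMap.ext fun x => hfg.apply_apply_eq_zero (φ x)
    simp [this]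
  obtain ⟨n, φ, rfl⟩ := exists_of I z
  rw [map_of] at hz
  obtain ⟨m, hm, h0⟩ := exists_restrict_eq_zero_of_of_eq_zero I hz
  -- on `Iᵐ`, `φ` lands in `ker g = range f`, so it lifts along `f`
  have hlift : ∀ x, (φ ∘ₗ Submodule.inclusion (Ideal.pow_le_pow_right hm)) x ∈ LinearMap.range f :=
    fun x => hfg.linearMap_ker_eq ▸ LinearMap.congr_fun h0 x
  refine ⟨of I m ((LinearEquiv.ofInjective f hf).symm.toLinearMap ∘ₗ
    (φ ∘ₗ Submodule.inclusion (Ideal.pow_le_pow_right hm)).codRestrict _ hlift), ?_⟩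
  rw [map_of, ← of_restrict I hm]
  congr 1
  ext x
  simp

lemma finite_of_subsingleton [Subsingleton M] : Module.Finite R (localHull R I M) :=
  have : Subsingleton (localHull R I M) := by
    refine subsingleton_of_forall_eq 0 fun z => ?_
    obtain ⟨n, φ, rfl⟩ := exists_of I z
    rw [Subsingleton.elim φ 0, map_zero]
  inferInstance

section Noetherian

variable [IsNoetherianRing R]

lemma finite_of_injective {f : M →ₗ[R] N} (hf : Function.Injective f)
    [Module.Finite R (localHull R I N)] : Module.Finite R (localHull R I M) :=
  have := isNoetherian_of_injective (map I f) (map_injective I hf)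
  inferInstance

lemma finite_of_exact {f : M →ₗ[R] N} {g : N →ₗ[R] P} (hf : Function.Injective f)
    (hfg : Function.Exact f g) [Module.Finite R (localHull R I M)]
    [Module.Finite R (localHull R I P)] : Module.Finite R (localHull R I N) :=
  have := isNoetherian_of_range_eq_ker (map I f) (map I g)
    (exact_map I hf hfg).linearMap_ker_eq.symm
  inferInstance

lemma finite_prod [Module.Finite R (localHull R I M)] [Module.Finite R (localHull R I N)] :
    Module.Finite R (localHull R I (M × N)) :=
  finite_of_exact I LinearMap.inl_injective .inl_snd

lemma finite_pi (D : Type u) [AddCommGroup D] [Module R D] [Module.Finite R (localHull R I D)] :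
    ∀ n : ℕ, Module.Finite R (localHull R I (Fin n → D))
  | 0 => finite_of_subsingleton I
  | n + 1 =>
    have := finite_pi D n
    have := finite_prod I (M := D) (N := Fin n → D)
    finite_of_injective I (Fin.consLinearEquiv R fun _ => D).symm.injective

section Coprimary

variable {q : Ideal R} [q.IsPrime] [Module.Finite R (localHull R I (R ⧸ q))]

lemma finite_of_isTorsionBySet_prime (T : Type u) [AddCommGroup T] [Module R T]
    [Module.Finite R T] (hT : Module.IsTorsionBySet R T q)
    (hreg : ∀ s ∉ q, ∀ x : T, s • x = 0 → x = 0) : Module.Finite R (localHull R I T) := by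
  let := hT.module
  have := hT.isScalarTower (S := R)
  have : Module.Finite (R ⧸ q) T := Module.Finite.of_restrictScalars_finite R _ _
  have : Module.IsTorsionFree (R ⧸ q) T := .of_smul_eq_zero fun r x h => by
    obtain ⟨r, rfl⟩ := Ideal.Quotient.mk_surjective r
    rw [Module.IsTorsionBySet.mk_smul hT] at h
    by_cases hr : r ∈ q
    · exact .inl (Ideal.Quotient.eq_zero_iff_mem.mpr hr)
    · exact .inr (hreg r hr x h)
  obtain ⟨n, f, hf⟩ := Module.exists_injective_pi_of_isTorsionFree (D := R ⧸ q) (Q := T)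
  have := finite_pi I (R ⧸ q) n
  exact finite_of_injective I (f := f.restrictScalars R) hf

lemma finite_of_isTorsionBySet_pow (T : Type u) [AddCommGroup T] [Module R T] [Module.Finite R T]
    {l : ℕ} (hT : Module.IsTorsionBySet R T ↑(q ^ l))
    (hreg : ∀ s ∉ q, ∀ x : T, s • x = 0 → x = 0) : Module.Finite R (localHull R I T) := by
  induction l generalizing T with
  | zero =>
    have : Subsingleton T := subsingleton_of_forall_eq 0 fun x => by
      simpa using @hT x ⟨1, by simp⟩
    exact finite_of_subsingleton I
  | succ l ih =>
    set K := Submodule.torsionBySet R T q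
    have hK : ∀ {x : T}, x ∈ K ↔ ∀ a ∈ q, a • x = 0 := by
      simp [K, Submodule.mem_torsionBySet_iff]
    have := finite_of_isTorsionBySet_prime I K (Submodule.torsionBySet_isTorsionBySet _)
      fun s hs x hx => Subtype.ext (hreg s hs x (congrArg Subtype.val hx))
    have : Module.Finite R (localHull R I (T ⧸ K)) := by
      refine ih (T ⧸ K) (fun x a => ?_) fun s hs x hx => ?_
      · obtain ⟨x, rfl⟩ := K.mkQ_surjective x
        rw [← map_smul, Submodule.mkQ_apply, Submodule.Quotient.mk_eq_zero, hK]
        intro b hb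
        rw [smul_smul]
        exact @hT x ⟨b * a, pow_succ' q l ▸ Ideal.mul_mem_mul hb a.2⟩
      · obtain ⟨x, rfl⟩ := K.mkQ_surjective x
        rw [← map_smul, Submodule.mkQ_apply, Submodule.Quotient.mk_eq_zero, hK] at hx
        rw [Submodule.mkQ_apply, Submodule.Quotient.mk_eq_zero, hK]
        exact fun a ha => hreg s hs _ (by rw [smul_comm, hx a ha])
    exact finite_of_exact I K.injective_subtype (LinearMap.exact_subtype_mkQ K)

end Coprimary

lemma finite_quotient_of_isPrimary [Module.Finite R M] {J : Submodule R M} (hJ : J.IsPrimary)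
    [Module.Finite R (localHull R I (R ⧸ (J.colon Set.univ).radical))] :
    Module.Finite R (localHull R I (M ⧸ J)) := by
  have := hJ.isPrime_radical_colon
  obtain ⟨l, hl⟩ := Ideal.exists_pow_le_of_le_radical_of_fg le_rfl
    (IsNoetherian.noetherian (J.colon Set.univ).radical)
  refine finite_of_isTorsionBySet_pow I (q := (J.colon Set.univ).radical) (M ⧸ J) (l := l) (fun x a => ?_) fun s hs x hx => ?_
  · obtain ⟨x, rfl⟩ := J.mkQ_surjective x
    rw [← map_smul, Submodule.mkQ_apply, Submodule.Quotient.mk_eq_zero]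
    exact Submodule.mem_colon.mp (hl a.2) x trivial
  · obtain ⟨x, rfl⟩ := J.mkQ_surjective x
    rw [← map_smul, Submodule.mkQ_apply, Submodule.Quotient.mk_eq_zero] at hx
    rw [Submodule.mkQ_apply, Submodule.Quotient.mk_eq_zero]
    exact (hJ.mem_or_mem hx).resolve_right hs

lemma finite_quotient_finsetInf (s : Finset (Submodule R M))
    (hs : ∀ J ∈ s, Module.Finite R (localHull R I (M ⧸ J))) :
    Module.Finite R (localHull R I (M ⧸ s.inf id)) := by
  classical
  induction s using Finset.induction_on with
  | empty =>
    rw [Finset.inf_empty]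
    exact finite_of_subsingleton I
  | insert J s _ ih =>
    have := hs J (Finset.mem_insert_self J s)
    have := ih fun J' hJ' => hs J' (Finset.mem_insert_of_mem hJ')
    have := finite_prod I (M := M ⧸ J) (N := M ⧸ s.inf id)
    rw [Finset.inf_insert, id]
    exact finite_of_injective I <| LinearMap.ker_eq_bot.mp <|
      Submodule.ker_liftQ_eq_bot' _ (J.mkQ.prod (s.inf id).mkQ)
        (by rw [LinearMap.ker_prod, Submodule.ker_mkQ, Submodule.ker_mkQ])

lemma finite_quotient_of_mem_associatedPrimes [Module.Finite R (localHull R I M)] {q : Ideal R}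
    (hq : q ∈ associatedPrimes R M) : Module.Finite R (localHull R I (R ⧸ q)) := by
  obtain ⟨-, f, hf⟩ := (isAssociatedPrime_iff_exists_injective_linearMap q M).mp hq
  exact finite_of_injective I hf

lemma finite_of_forall_mem_associatedPrimes [Module.Finite R M]
    (h : ∀ q ∈ associatedPrimes R M, Module.Finite R (localHull R I (R ⧸ q))) :
    Module.Finite R (localHull R I M) := by
  obtain ⟨t, ht⟩ := Submodule.IsLasker.exists_isMinimalPrimaryDecomposition (Submodule.isLasker R M) ⊥
  have := finite_quotient_finsetInf I t fun J hJ =>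
    have := h _ (ht.mem_associatedPrimes hJ)
    finite_quotient_of_isPrimary I (ht.primary hJ)
  exact finite_of_injective I (f := (t.inf id).mkQ)
    (LinearMap.ker_eq_bot.mp (by rw [Submodule.ker_mkQ, ht.inf_eq]))

end Noetherian

end localHull

theorem local_hull_finite_iff_finite_on_associated_primes_general
    (R : Type u) [CommRing R] [IsNoetherianRing R] (I : Ideal R)
    (M : Type u) [AddCommGroup M] [Module R M] [Module.Finite R M] :
    Module.Finite R (localHull R I M) ↔
      ∀ q ∈ associatedPrimes R M, Module.Finite R (localHull R I (R ⧸ q)) :=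
  ⟨fun _ _ => localHull.finite_quotient_of_mem_associatedPrimes I,
    localHull.finite_of_forall_mem_associatedPrimes I⟩

/-- Let `R` be a Noetherian ring, `I ⊆ R` an ideal, and `M` a finite `R`-module such that no
associated prime of `M` contains `I`.  Then `colim_n Hom_R(Iⁿ, M)` is a finite `R`-module if
and only if, for every associated prime `q` of `M`, the module `colim_n Hom_R(Iⁿ, R/q)` is a
finite `R`-module. -/
theorem local_hull_finite_iff_finite_on_associated_primes
    (R : Type u) [CommRing R] [IsNoetherianRing R] (I : Ideal R)
    (M : Type u) [AddCommGroup M] [Module R M] [Module.Finite R M]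
    (hass : ∀ p ∈ associatedPrimes R M, ¬ I ≤ p) :
    Module.Finite R (localHull R I M) ↔
      ∀ q ∈ associatedPrimes R M, Module.Finite R (localHull R I (R ⧸ q)) :=
  local_hull_finite_iff_finite_on_associated_primes_general R I M
end

section
/- Let R be a Noetherian ring, M a finite R-module, and I ⊆ R an ideal not contained in any associated prime of M. Then the set of primes p ⊆ R with I ⊆ p and depth_{R_p} M_p ≤ 1 is finite. -/
/-!
Choose `x ∈ I` regular on `M`, by prime avoidance over the finitely many associated primes of
`M`. Let `p ⊇ I` be a prime that is not an associated prime of `M ⧸ xM`. Then `x` stays regular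
on `M_p`, and since associated primes are compatible with localization, the maximal ideal of
`R_p` is not an associated prime of `M_p ⧸ xM_p`; prime avoidance in `R_p` then gives a second
regular element, so `depth M_p ≥ 2`. Hence all primes of the set lie in the finite set
`Ass(M ⧸ xM)`.
-/

universe u

/-- `depthGE R J M n` : there is a weakly regular sequence on `M` of length `n` with entries
in `J`.  For a Noetherian local ring `R` and a finite module `M` with `J • M ≠ M` this says
exactly `depth_J M ≥ n` (and the zero module has depth `+∞`, so `depthGE` always holds
for it, matching the usual convention). -/
def depthGE (R : Type u) [CommRing R] (J : Ideal R)
    (M : Type u) [AddCommGroup M] [Module R M] (n : ℕ) : Prop :=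
  ∃ rs : List R, rs.length = n ∧ (∀ r ∈ rs, r ∈ J) ∧
    RingTheory.Sequence.IsWeaklyRegular M rs

open Pointwise

theorem exists_mem_isSMulRegular_of_forall_not_le_associatedPrime
    {R M : Type*} [CommRing R] [IsNoetherianRing R] [AddCommGroup M] [Module R M]
    [Module.Finite R M] {J : Ideal R} (hJ : ∀ q ∈ associatedPrimes R M, ¬ J ≤ q) :
    ∃ x ∈ J, IsSMulRegular M x := by
  by_contra! h
  have hJ_sub : (J : Set R) ⊆ ⋃ q ∈ associatedPrimes R M, (q : Set R) := by
    rw [biUnion_associatedPrimes_eq_compl_regular]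
    exact h
  obtain ⟨q, hq, hJq⟩ := (Ideal.subset_union_prime_finite (associatedPrimes.finite R M) J J
    fun q hq _ _ ↦ hq.isPrime).mp hJ_sub
  exact hJ q hq hJq

section Localization

variable {R M N : Type*} [CommRing R] [AddCommGroup M] [Module R M] [AddCommGroup N] [Module R N]

theorem Submodule.localized'_smul_top (S : Type*) [CommRing S] [Algebra R S] [Module S N]
    [IsScalarTower R S N] (p : Submonoid R) [IsLocalization p S] (f : M →ₗ[R] N)
    [IsLocalizedModule p f] (x : R) :
    (x • ⊤ : Submodule R M).localized' S p f = algebraMap R S x • ⊤ := by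
  rw [← ideal_span_singleton_smul, ← ideal_span_singleton_smul, localized'_smul, localized'_top,
    Ideal.span, localized'_span, Set.image_singleton, Algebra.linearMap_apply, Ideal.span]

open Module.associatedPrimes in
theorem comap_mem_associatedPrimes_quotSMulTop_of_isLocalizedModule [IsNoetherianRing R]
    {S : Type*} [CommRing S] [Algebra R S] [Module S N] [IsScalarTower R S N]
    (p : Submonoid R) [IsLocalization p S] (f : M →ₗ[R] N) [IsLocalizedModule p f] (x : R)
    {P : Ideal S} (hP : P ∈ associatedPrimes S (QuotSMulTop (algebraMap R S x) N)) :
    P.comap (algebraMap R S) ∈ associatedPrimes R (QuotSMulTop x M) := by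
  let e := (Submodule.quotEquivOfEq _ _ (Submodule.localized'_smul_top S p f x)).restrictScalars R
  let g := e.toLinearMap ∘ₗ (x • ⊤ : Submodule R M).toLocalizedQuotient' S p f
  have : IsLocalizedModule p g := IsLocalizedModule.of_linearEquiv p _ e
  exact (preimage_comap_associatedPrimes_eq_associatedPrimes_of_isLocalizedModule p S g).ge hP

end Localization

theorem depthGE_two_of_isSMulRegular {R M : Type u} [CommRing R] [AddCommGroup M] [Module R M]
    {J : Ideal R} {x y : R} (hx : x ∈ J) (hy : y ∈ J) (hx_reg : IsSMulRegular M x)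
    (hy_reg : IsSMulRegular (QuotSMulTop x M) y) : depthGE R J M 2 := by
  refine ⟨[x, y], rfl, by simp [hx, hy], ?_⟩
  rw [RingTheory.Sequence.isWeaklyRegular_cons_iff, RingTheory.Sequence.isWeaklyRegular_cons_iff]
  exact ⟨hx_reg, hy_reg, .nil _ _⟩

theorem IsLocalRing.depthGE_two_of_maximalIdeal_notMem_associatedPrimes {R M : Type u}
    [CommRing R] [IsLocalRing R] [IsNoetherianRing R] [AddCommGroup M] [Module R M]
    [Module.Finite R M] {x : R} (hx : x ∈ maximalIdeal R) (hx_reg : IsSMulRegular M x)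
    (h : maximalIdeal R ∉ associatedPrimes R (QuotSMulTop x M)) :
    depthGE R (maximalIdeal R) M 2 := by
  obtain ⟨y, hy, hy_reg⟩ := exists_mem_isSMulRegular_of_forall_not_le_associatedPrime
    (M := QuotSMulTop x M) (J := maximalIdeal R) fun q hq hle ↦
      h <| (le_antisymm (le_maximalIdeal hq.isPrime.ne_top) hle) ▸ hq
  exact depthGE_two_of_isSMulRegular hx hy hx_reg hy_reg

/-- Let `R` be a Noetherian ring, `M` a finite `R`-module, and `I ⊆ R` an ideal not contained
in any associated prime of `M`.  Then the set of primes `p ⊇ I` with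
`depth_{R_p} M_p ≤ 1` is finite. -/
theorem finite_primes_of_low_depth
    (R : Type u) [CommRing R] [IsNoetherianRing R]
    (M : Type u) [AddCommGroup M] [Module R M] [Module.Finite R M]
    (I : Ideal R) (hI : ∀ p ∈ associatedPrimes R M, ¬ I ≤ p) :
    {p : PrimeSpectrum R | I ≤ p.asIdeal ∧
      ¬ depthGE (Localization.AtPrime p.asIdeal)
          (IsLocalRing.maximalIdeal (Localization.AtPrime p.asIdeal))
          (LocalizedModule p.asIdeal.primeCompl M) 2}.Finite := by
  obtain ⟨x, hxI, hx_reg⟩ := exists_mem_isSMulRegular_of_forall_not_le_associatedPrime hI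
  refine ((associatedPrimes.finite R (QuotSMulTop x M)).preimage
    (fun _ _ _ _ ↦ PrimeSpectrum.ext)).subset ?_
  rintro p ⟨hIp, hdepth⟩
  by_contra hp
  let f := LocalizedModule.mkLinearMap p.asIdeal.primeCompl M
  refine hdepth <| IsLocalRing.depthGE_two_of_maximalIdeal_notMem_associatedPrimes
    ((IsLocalization.AtPrime.to_map_mem_maximal_iff _ p.asIdeal x).mpr (hIp hxI))
    (hx_reg.of_isLocalizedModule _ p.asIdeal.primeCompl f) fun hm ↦ hp ?_
  have hcomap :=
    comap_mem_associatedPrimes_quotSMulTop_of_isLocalizedModule p.asIdeal.primeCompl f x hm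
  rwa [← Ideal.under_def, Localization.AtPrime.under_maximalIdeal] at hcomap
end

section
/- Let (R,m) be a Noetherian local ring and M a finite R-module with depth_m M ≥ 2. Let M' ⊆ M be an m-saturated submodule, i.e., there is no submodule N with M' ⊊ N ⊆ M and mN ⊆ M'. Then depth_m M' ≥ 2. -/
universe u

/-!
Saturation of `M'` says exactly that no nonzero element of `M ⧸ M'` is killed by `m`, and
`depth M ≥ 1` says the same for `M`. Prime avoidance against their associated primes gives
`z ∈ m` regular on both. As `depth M ≥ 2`, no nonzero element of `M ⧸ zM` is killed by `m`
either, which yields `w ∈ m` regular on `M ⧸ zM`. Since `z` is regular on `M ⧸ M'`, the map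
`M' ⧸ zM' → M ⧸ zM` is injective, so `w` is regular on `M' ⧸ zM'` and `z, w` is an
`M'`-sequence.
-/

open Submodule Pointwise RingTheory.Sequence IsLocalRing

lemma depthGE_two_iff {R M : Type u} [CommRing R] [AddCommGroup M] [Module R M] {J : Ideal R} :
    depthGE R J M 2 ↔ ∃ x ∈ J, ∃ y ∈ J,
      IsSMulRegular M x ∧ IsSMulRegular (QuotSMulTop x M) y := by
  constructor
  · rintro ⟨rs, hlen, hmem, hreg⟩
    obtain ⟨x, y, rfl⟩ := List.length_eq_two.mp hlen
    rw [isWeaklyRegular_cons_iff, isWeaklyRegular_singleton_iff] at hreg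
    exact ⟨x, hmem x (by simp), y, hmem y (by simp), hreg⟩
  · rintro ⟨x, hx, y, hy, hreg⟩
    refine ⟨[x, y], rfl, by simp [hx, hy], ?_⟩
    rwa [isWeaklyRegular_cons_iff, isWeaklyRegular_singleton_iff]

section

variable {R M : Type*} [CommRing R] [AddCommGroup M] [Module R M]

/-- Prime avoidance against the finitely many associated primes of `M`. -/
lemma exists_mem_isSMulRegular_of_forall_smul_eq_zero [IsNoetherianRing R] [Module.Finite R M]
    {I : Ideal R} (h : ∀ u : M, (∀ r ∈ I, r • u = 0) → u = 0) :
    ∃ r ∈ I, IsSMulRegular M r := by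
  by_contra! hI
  have hsub : (I : Set R) ⊆ ⋃ p ∈ associatedPrimes R M, (p : Set R) := by
    rw [biUnion_associatedPrimes_eq_compl_regular]
    exact hI
  obtain ⟨p, hp, hIp⟩ := (Ideal.subset_union_prime_finite (associatedPrimes.finite R M) ⊥ ⊥
    fun p hp _ _ => hp.isPrime).mp hsub
  obtain ⟨hprime, u, rfl⟩ := isAssociatedPrime_iff.mp hp
  have hu : u = 0 := h u fun r hr => (mem_bot R).mp (mem_colon_singleton.mp (hIp hr))
  exact hprime.ne_top (eq_top_iff.mpr fun r _ => mem_colon_singleton.mpr (by simp [hu]))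

lemma eq_zero_of_forall_smul_eq_zero_of_saturated {I : Ideal R} {N : Submodule R M}
    (hsat : ∀ N' : Submodule R M, N < N' → ¬ I • N' ≤ N) (u : M ⧸ N)
    (hu : ∀ r ∈ I, r • u = 0) : u = 0 := by
  obtain ⟨v, rfl⟩ := N.mkQ_surjective u
  by_contra hv
  have hvN : v ∉ N := by simpa [Quotient.mk_eq_zero] using hv
  refine hsat (N ⊔ R ∙ v) (left_lt_sup.mpr (by rwa [span_singleton_le_iff_mem])) ?_
  rw [smul_sup]
  refine sup_le smul_le_right (smul_le.mpr fun r hr w hw => ?_)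
  obtain ⟨s, rfl⟩ := mem_span_singleton.mp hw
  rw [smul_comm]
  exact N.smul_mem s ((Quotient.mk_eq_zero N).mp (hu r hr))

/-- From `xu = za` and `yu = zb`, regularity of `z` gives `ya = xb`, hence `a = xc` as `y` is
regular on `M ⧸ xM`; cancelling `x` in `xu = z(xc)` gives `u = zc`. -/
lemma QuotSMulTop.eq_zero_of_smul_eq_zero {x y z : R} (hx : IsSMulRegular M x)
    (hy : IsSMulRegular (QuotSMulTop x M) y) (hz : IsSMulRegular M z) {u : QuotSMulTop z M}
    (hxu : x • u = 0) (hyu : y • u = 0) : u = 0 := by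
  obtain ⟨v, rfl⟩ := mkQ_surjective _ u
  rw [mkQ_apply, ← Quotient.mk_smul, Quotient.mk_eq_zero] at hxu hyu
  rw [mkQ_apply, Quotient.mk_eq_zero]
  obtain ⟨a, -, ha⟩ := (mem_smul_pointwise_iff_exists _ _ _).mp hxu
  obtain ⟨b, -, hb⟩ := (mem_smul_pointwise_iff_exists _ _ _).mp hyu
  have hab : y • a = x • b :=
    hz <| show z • y • a = z • x • b by rw [smul_comm z y, ha, smul_comm z x, hb, smul_comm]
  obtain ⟨c, -, hc⟩ := (mem_smul_pointwise_iff_exists _ _ _).mp <|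
    mem_of_isSMulRegular_quotient_of_smul_mem hy (hab ▸ smul_mem_pointwise_smul b x ⊤ trivial)
  refine (mem_smul_pointwise_iff_exists _ _ _).mpr ⟨c, trivial, hx ?_⟩
  show x • z • c = x • v
  rw [smul_comm, hc, ha]

lemma QuotSMulTop.map_subtype_injective {z : R} {N : Submodule R M}
    (hz : IsSMulRegular (M ⧸ N) z) : Function.Injective (QuotSMulTop.map z N.subtype) := by
  have := QuotSMulTop.map_first_exact_on_four_term_exact_of_isSMulRegular_last
    (f₁ := (0 : PUnit →ₗ[R] N))
    ((LinearMap.exact_zero_iff_injective _ _).mpr N.injective_subtype)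
    (LinearMap.exact_subtype_mkQ N) hz
  rwa [map_zero, LinearMap.exact_zero_iff_injective] at this

end

/-- Let `(R,m)` be a Noetherian local ring and `M` a finite `R`-module with `depth_m M ≥ 2`.
Let `M' ⊆ M` be an `m`-saturated submodule (there is no `N` with `M' ⊊ N ⊆ M` and
`m N ⊆ M'`).  Then `depth_m M' ≥ 2`. -/
theorem depth_two_of_saturated_submodule
    (R : Type u) [CommRing R] [IsNoetherianRing R] [IsLocalRing R]
    (M : Type u) [AddCommGroup M] [Module R M] [Module.Finite R M]
    (hM : depthGE R (IsLocalRing.maximalIdeal R) M 2)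
    (M' : Submodule R M)
    (hsat : ∀ N : Submodule R M, M' < N → ¬ (IsLocalRing.maximalIdeal R • N ≤ M')) :
    depthGE R (IsLocalRing.maximalIdeal R) M' 2 := by
  obtain ⟨x, hxm, y, hym, hx, hy⟩ := depthGE_two_iff.mp hM
  -- an element regular on `M × (M ⧸ M')` is regular on both factors
  obtain ⟨z, hzm, hz⟩ := exists_mem_isSMulRegular_of_forall_smul_eq_zero
    (M := M × (M ⧸ M')) (I := maximalIdeal R) fun u hu =>
      Prod.ext (hx.right_eq_zero_of_smul (congrArg Prod.fst (hu x hxm)))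
        (eq_zero_of_forall_smul_eq_zero_of_saturated hsat _ fun r hr =>
          congrArg Prod.snd (hu r hr))
  have hzM : IsSMulRegular M z := hz.of_injective _ LinearMap.inl_injective
  have hzQ : IsSMulRegular (M ⧸ M') z := hz.of_injective _ LinearMap.inr_injective
  obtain ⟨w, hwm, hw⟩ := exists_mem_isSMulRegular_of_forall_smul_eq_zero
    (M := QuotSMulTop z M) (I := maximalIdeal R) fun u hu =>
      QuotSMulTop.eq_zero_of_smul_eq_zero hx hy hzM (hu x hxm) (hu y hym)
  exact depthGE_two_iff.mpr ⟨z, hzm, w, hwm, hzM.submodule M' z,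
    hw.of_injective _ (QuotSMulTop.map_subtype_injective hzQ)⟩
end
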